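/- Let X be a complete CAT(0) space, f₁, …, fₘ : X → (−∞, ∞] proper lsc convex functions with ⋂ᵢ argmin fᵢ ≠ ∅, and λ₁, …, λₘ > 0. Then for any x₀ ∈ X the iterates xₙ := (R_{λₘ,fₘ} ∘ ⋯ ∘ R_{λ₁,f₁})ⁿ(x₀) Δ-converge to a point x* ∈ argmin (f₁ + ⋯ + fₘ). -/

import Mathlib

open Filter Metric

variable {X : Type*} [MetricSpace X]

/-- Fixed point set of a self-map. -/
def FixSet (S : X → X) : Set X := {x | S x = x}

/-- Quasi-nonexpansive: nonempty fixed point set and `dist (S x) q ≤ dist x q`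
for every `x` and every fixed point `q`. -/
def QuasiNonexpansive (S : X → X) : Prop :=
  (FixSet S).Nonempty ∧ ∀ x q, q ∈ FixSet S → dist (S x) q ≤ dist x q

/-- Strongly quasi-nonexpansive. -/
def StronglyQuasiNonexpansive (S : X → X) : Prop :=
  QuasiNonexpansive S ∧
    ∀ x : ℕ → X, Bornology.IsBounded (Set.range x) →
      ∀ q ∈ FixSet S,
        Tendsto (fun n => dist (x n) q - dist (S (x n)) q) atTop (nhds 0) →
        Tendsto (fun n => dist (x n) (S (x n))) atTop (nhds 0)

/-- Complete CAT(0) (Hadamard) space: complete and every pair of points has a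
midpoint satisfying the CN (comparison) inequality. -/
def IsHadamard (X : Type*) [MetricSpace X] : Prop :=
  CompleteSpace X ∧
    ∀ x y : X, ∃ m : X, dist x m = dist x y / 2 ∧ dist y m = dist x y / 2 ∧
      ∀ z : X, dist z m ^ 2 ≤ (dist z x ^ 2 + dist z y ^ 2) / 2 - dist x y ^ 2 / 4

/-- `z` is an asymptotic center of the bounded sequence `x`. -/
def AsympCenter (x : ℕ → X) (z : X) : Prop :=
  ∀ y : X, limsup (fun n => dist z (x n)) atTop ≤ limsup (fun n => dist y (x n)) atTop

/-- Δ-convergence: `x` is bounded and `z` is an asymptotic center of every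
subsequence of `x`. -/
def DeltaConv (x : ℕ → X) (z : X) : Prop :=
  Bornology.IsBounded (Set.range x) ∧
    ∀ φ : ℕ → ℕ, StrictMono φ → AsympCenter (x ∘ φ) z

/-- Δ-demiclosed mapping. -/
def DeltaDemiclosed (S : X → X) : Prop :=
  ∀ (x : ℕ → X) (z : X), DeltaConv x z →
    Tendsto (fun n => dist (x n) (S (x n))) atTop (nhds 0) → z ∈ FixSet S

/-- Orbital Δ-demiclosed mapping. -/
def OrbitalDeltaDemiclosed (S : X → X) : Prop :=
  ∀ (x : ℕ → X) (z : X),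
    (∃ (x0 : X) (φ : ℕ → ℕ), StrictMono φ ∧ ∀ n, x n = S^[φ n] x0) →
    DeltaConv x z →
    Tendsto (fun n => dist (x n) (S (x n))) atTop (nhds 0) → z ∈ FixSet S

/-- Composition `S (k-1) ∘ ⋯ ∘ S 0` of the first `k` mappings. -/
def compUpTo (S : ℕ → X → X) : ℕ → X → X
  | 0 => id
  | k + 1 => S k ∘ compUpTo S k

/-- A geodesically convex subset of a uniquely geodesic space: contains every
metric between-point of any two of its points. -/
def GConvex (C : Set X) : Prop :=
  ∀ x ∈ C, ∀ y ∈ C, ∀ z : X, dist x z + dist z y = dist x y → z ∈ C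

/-- Geodesic convexity of an extended-real-valued function. -/
def GConvexFun (f : X → EReal) : Prop :=
  ∀ x y z : X, ∀ t : ℝ, t ∈ Set.Icc (0 : ℝ) 1 →
    dist x z = t * dist x y → dist z y = (1 - t) * dist x y →
    f z ≤ ((1 - t : ℝ) : EReal) * f x + ((t : ℝ) : EReal) * f y

/-- Set of global minimizers. -/
def argminSet (f : X → EReal) : Set X := {x | ∀ y, f x ≤ f y}

/-- `R` is the resolvent of `f` with parameter `lam`. -/
def IsResolvent (f : X → EReal) (lam : ℝ) (R : X → X) : Prop :=
  ∀ x y : X,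
    f (R x) + (((dist x (R x)) ^ 2 / (2 * lam) : ℝ) : EReal) ≤
      f y + (((dist x y) ^ 2 / (2 * lam) : ℝ) : EReal)

/-!
Each resolvent `R` of a convex function satisfies the variational inequality
`2λ f(Rx) + d(x,Rx)² + d(Rx,y)² ≤ 2λ f(y) + d(x,y)²`, obtained by comparing `Rx` with points
of the geodesic from `Rx` to `y` and using the CN inequality. For `y = q` a common minimizer
it gives `d(x,Rx)² + d(Rx,q)² ≤ d(x,q)²`, so the orbit is Fejér monotone with respect to the
common fixed points and every step of a sweep tends to zero. Adding the inequalities at `x`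
and `x'` makes each `R` Δ-demiclosed, so asymptotic centers of subsequences of the orbit are
common fixed points. The distance from the orbit to such a point converges, and the uniform
convexity `r(z)² + d(z,y)²/2 ≤ r(y)²` of the asymptotic radius about a center `z` then forces
all these centers to coincide.
-/

open Bornology Topology

def HasCNMidpoints (X : Type*) [MetricSpace X] : Prop :=
  ∀ x y : X, ∃ m : X, dist x m = dist x y / 2 ∧ dist y m = dist x y / 2 ∧
    ∀ z : X, dist z m ^ 2 ≤ (dist z x ^ 2 + dist z y ^ 2) / 2 - dist x y ^ 2 / 4

lemma limsup_le_limsup_of_le_add_of_tendsto_zero {u a s : ℕ → ℝ} (h : ∀ n, u n ≤ a n + s n)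
    (hs : Tendsto s atTop (𝓝 0)) (hu : IsCoboundedUnder (· ≤ ·) atTop u)
    (ha : IsBoundedUnder (· ≤ ·) atTop a) (ha' : IsBoundedUnder (· ≥ ·) atTop a) :
    limsup u atTop ≤ limsup a atTop :=
  calc limsup u atTop ≤ limsup (a + s) atTop :=
        limsup_le_limsup (Eventually.of_forall h) hu
          (isBoundedUnder_le_add ha hs.isBoundedUnder_le)
    _ ≤ limsup a atTop + limsup s atTop :=
        limsup_add_le ha' ha hs.isBoundedUnder_ge.isCoboundedUnder_le hs.isBoundedUnder_le
    _ = limsup a atTop := by rw [hs.limsup_eq, add_zero]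

noncomputable def asympRadius (w : ℕ → X) (y : X) : ℝ :=
  limsup (fun n => dist y (w n)) atTop

section AsympRadius

variable {w : ℕ → X}

lemma exists_dist_le_of_isBounded (hb : IsBounded (Set.range w)) (y : X) :
    ∃ C, ∀ n, dist y (w n) ≤ C := by
  obtain ⟨C, hC⟩ := hb.subset_closedBall y
  exact ⟨C, fun n => by simpa [dist_comm] using hC ⟨n, rfl⟩⟩

lemma isBoundedUnder_dist (hb : IsBounded (Set.range w)) (y : X) :
    IsBoundedUnder (· ≤ ·) atTop fun n => dist y (w n) :=
  isBoundedUnder_of (exists_dist_le_of_isBounded hb y)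

lemma isBoundedUnder_dist_sq (hb : IsBounded (Set.range w)) (y : X) :
    IsBoundedUnder (· ≤ ·) atTop fun n => dist y (w n) ^ 2 := by
  obtain ⟨C, hC⟩ := exists_dist_le_of_isBounded hb y
  exact isBoundedUnder_of ⟨C ^ 2, fun n => pow_le_pow_left₀ dist_nonneg (hC n) 2⟩

lemma asympRadius_nonneg (hb : IsBounded (Set.range w)) (y : X) :
    0 ≤ asympRadius w y :=
  le_limsup_of_frequently_le (Frequently.of_forall fun _ => dist_nonneg)
    (isBoundedUnder_dist hb y)

lemma asympRadius_sq (hb : IsBounded (Set.range w)) (y : X) :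
    asympRadius w y ^ 2 = limsup (fun n => dist y (w n) ^ 2) atTop := by
  have hmono : Monotone fun t : ℝ => max t 0 ^ 2 := fun a b hab =>
    pow_le_pow_left₀ (le_max_right _ _) (max_le_max hab le_rfl) 2
  have key := hmono.map_limsup_of_continuousAt (fun n => dist y (w n))
    (by fun_prop : Continuous fun t : ℝ => max t 0 ^ 2).continuousAt
    (isBoundedUnder_dist hb y) (isCoboundedUnder_le_of_le atTop fun _ => dist_nonneg)
  simp only [Function.comp_def, max_eq_left dist_nonneg] at key
  have h0 := asympRadius_nonneg hb y
  unfold asympRadius at h0 ⊢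
  rw [← key, max_eq_left h0]

lemma asympRadius_le_add_dist (hb : IsBounded (Set.range w)) (y z : X) :
    asympRadius w z ≤ asympRadius w y + dist z y := by
  rw [asympRadius, asympRadius, ← limsup_add_const atTop _ _ (isBoundedUnder_dist hb y)
    (isCoboundedUnder_le_of_le atTop fun _ => dist_nonneg)]
  refine limsup_le_limsup (Eventually.of_forall fun n => ?_)
    (isCoboundedUnder_le_of_le atTop fun _ => dist_nonneg) ?_
  · linarith [dist_triangle z y (w n), dist_comm z y]
  · exact isBoundedUnder_le_add (isBoundedUnder_dist hb y) isBoundedUnder_const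

lemma asympRadius_sq_le_of_cn (hb : IsBounded (Set.range w)) {y y' m : X}
    (hm : ∀ z : X, dist z m ^ 2 ≤ (dist z y ^ 2 + dist z y' ^ 2) / 2 - dist y y' ^ 2 / 4) :
    asympRadius w m ^ 2 ≤
      (asympRadius w y ^ 2 + asympRadius w y' ^ 2) / 2 - dist y y' ^ 2 / 4 := by
  rw [asympRadius_sq hb, asympRadius_sq hb, asympRadius_sq hb]
  refine le_of_forall_pos_le_add fun ε hε => limsup_le_of_le
    (isCoboundedUnder_le_of_le atTop fun _ => sq_nonneg _) ?_
  filter_upwards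
    [eventually_lt_of_limsup_lt (lt_add_of_pos_right _ hε) (isBoundedUnder_dist_sq hb y),
      eventually_lt_of_limsup_lt (lt_add_of_pos_right _ hε) (isBoundedUnder_dist_sq hb y')]
    with n hy hy'
  have hmn := hm (w n)
  rw [dist_comm (w n) m, dist_comm (w n) y, dist_comm (w n) y'] at hmn
  linarith

lemma AsympCenter.sq_add_le (hX : HasCNMidpoints X) (hb : IsBounded (Set.range w))
    {z : X} (hz : AsympCenter w z) (y : X) :
    asympRadius w z ^ 2 + dist z y ^ 2 / 2 ≤ asympRadius w y ^ 2 := by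
  obtain ⟨m, -, -, hm⟩ := hX z y
  have hzm : asympRadius w z ^ 2 ≤ asympRadius w m ^ 2 :=
    pow_le_pow_left₀ (asympRadius_nonneg hb z) (hz m) 2
  linarith [asympRadius_sq_le_of_cn hb hm]

lemma exists_asympCenter [CompleteSpace X] (hX : HasCNMidpoints X)
    (hb : IsBounded (Set.range w)) : ∃ z, AsympCenter w z := by
  have : Nonempty X := ⟨w 0⟩
  set J := ⨅ y, asympRadius w y ^ 2
  have hJ : ∀ y, J ≤ asympRadius w y ^ 2 :=
    ciInf_le ⟨0, by rintro _ ⟨y, rfl⟩; positivity⟩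
  have hmin : ∀ k : ℕ, ∃ y, asympRadius w y ^ 2 < J + 1 / (k + 1) := fun k =>
    exists_lt_of_ciInf_lt (lt_add_of_pos_right J (by positivity))
  choose y hy using hmin
  -- the CN inequality at the midpoint of `y j` and `y k` makes the minimizing sequence Cauchy
  have hcauchy : CauchySeq y := by
    refine cauchySeq_of_le_tendsto_0 (fun N : ℕ => √(4 * (1 / (N + 1))))
      (fun j k N hj hk => ?_) ?_
    · obtain ⟨m, -, -, hm⟩ := hX (y j) (y k)
      rw [Real.le_sqrt dist_nonneg (by positivity)]
      linarith [asympRadius_sq_le_of_cn hb hm, hJ m, hy j, hy k,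
        Nat.one_div_le_one_div (α := ℝ) hj, Nat.one_div_le_one_div (α := ℝ) hk]
    · simpa using ((tendsto_one_div_add_atTop_nhds_zero_nat.const_mul 4).sqrt)
  obtain ⟨z, hz⟩ := cauchySeq_tendsto_of_complete hcauchy
  have hzJ : asympRadius w z ≤ √J := by
    have hbound : ∀ k : ℕ, asympRadius w z ≤ √(J + 1 / (k + 1)) + dist z (y k) := fun k =>
      (asympRadius_le_add_dist hb (y k) z).trans <| add_le_add_left
        ((Real.le_sqrt (asympRadius_nonneg hb _) ((sq_nonneg _).trans (hy k).le)).2 (hy k).le) _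
    have hlim : Tendsto (fun k : ℕ => √(J + 1 / (k + 1)) + dist z (y k)) atTop (𝓝 (√J)) := by
      simpa using (tendsto_one_div_add_atTop_nhds_zero_nat.const_add J).sqrt.add
        (tendsto_iff_dist_tendsto_zero.1 hz |>.congr fun k => dist_comm _ _)
    exact ge_of_tendsto' hlim hbound
  refine ⟨z, fun y' => hzJ.trans ?_⟩
  exact (Real.sqrt_le_left (asympRadius_nonneg hb y')).2 (hJ y')

lemma asympRadius_le_of_tendsto_dist {u v : ℕ → X} (hv : IsBounded (Set.range v))
    (h : Tendsto (fun n => dist (u n) (v n)) atTop (𝓝 0)) (y : X) :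
    asympRadius u y ≤ asympRadius v y :=
  limsup_le_limsup_of_le_add_of_tendsto_zero
    (fun n => (dist_triangle y (v n) (u n)).trans_eq (by rw [dist_comm (v n)])) h
    (isCoboundedUnder_le_of_le atTop fun _ => dist_nonneg) (isBoundedUnder_dist hv y)
    (isBoundedUnder_of ⟨0, fun _ => dist_nonneg⟩)

lemma isBounded_range_of_tendsto_dist {u v : ℕ → X} (hu : IsBounded (Set.range u))
    (h : Tendsto (fun n => dist (u n) (v n)) atTop (𝓝 0)) :
    IsBounded (Set.range v) := by
  obtain ⟨C, hC⟩ := exists_dist_le_of_isBounded hu (u 0)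
  obtain ⟨D, hD⟩ := h.bddAbove_range
  refine (Metric.isBounded_closedBall (x := u 0) (r := C + D)).subset ?_
  rintro _ ⟨n, rfl⟩
  exact ((dist_triangle _ _ _).trans (add_le_add (hC n) (hD ⟨n, rfl⟩))).trans_eq'
    (dist_comm _ _)

lemma AsympCenter.of_tendsto_dist {u v : ℕ → X} (hu : IsBounded (Set.range u))
    (h : Tendsto (fun n => dist (u n) (v n)) atTop (𝓝 0)) {c : X} (hc : AsympCenter u c) :
    AsympCenter v c := by
  have hv := isBounded_range_of_tendsto_dist hu h
  have h' : Tendsto (fun n => dist (v n) (u n)) atTop (𝓝 0) := by simpa [dist_comm] using h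
  have heq : ∀ y, asympRadius v y = asympRadius u y := fun y =>
    le_antisymm (asympRadius_le_of_tendsto_dist hu h' y) (asympRadius_le_of_tendsto_dist hv h y)
  intro y
  exact (heq c).trans_le ((hc y).trans_eq (heq y).symm)

lemma asympRadius_eq_of_tendsto {q : X} {L : ℝ}
    (h : Tendsto (fun n => dist (w n) q) atTop (𝓝 L)) : asympRadius w q = L :=
  (h.congr fun _ => dist_comm _ _).limsup_eq

end AsympRadius

lemma HasCNMidpoints.exists_dyadic (hX : HasCNMidpoints X) (u v : X) (k : ℕ) :
    ∃ w : X, dist u w = (1 / 2) ^ k * dist u v ∧ dist w v = (1 - (1 / 2) ^ k) * dist u v ∧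
      ∀ z : X, dist z w ^ 2 ≤ (1 - (1 / 2) ^ k) * dist z u ^ 2 + (1 / 2) ^ k * dist z v ^ 2
        - (1 / 2) ^ k * (1 - (1 / 2) ^ k) * dist u v ^ 2 := by
  induction k with
  | zero => exact ⟨v, by simp, by simp, fun z => by simp⟩
  | succ k ih =>
    obtain ⟨w, huw, hwv, hw⟩ := ih
    obtain ⟨m, hum, hwm, hm⟩ := hX u w
    set t : ℝ := (1 / 2) ^ k
    have ht : ((1 : ℝ) / 2) ^ (k + 1) = t / 2 := by rw [pow_succ]; ring
    rw [ht]
    refine ⟨m, by rw [hum, huw]; ring, ?_, fun z => ?_⟩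
    · have h1 := dist_triangle m w v
      have h2 := dist_triangle u m v
      rw [dist_comm m w, hwm, huw, hwv] at h1
      rw [hum, huw] at h2
      apply le_antisymm <;> linarith
    · have hmz := hm z
      rw [huw] at hmz
      linear_combination hmz + hw z / 2

section Resolvent

variable {f : X → EReal} {lam : ℝ} {R : X → X}

lemma IsResolvent.ne_top (hR : IsResolvent f lam R) (hlam : 0 < lam) {y : X} (hy : f y ≠ ⊤)
    (x : X) : f (R x) ≠ ⊤ := by
  refine ne_top_of_le_ne_top (EReal.add_lt_top hy (EReal.coe_ne_top _)).ne
    ((le_add_of_nonneg_right ?_).trans (hR x y))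
  exact_mod_cast (by positivity : (0 : ℝ) ≤ dist x (R x) ^ 2 / (2 * lam))

lemma IsResolvent.variational_ineq (hX : HasCNMidpoints X) (hR : IsResolvent f lam R)
    (hlam : 0 < lam) (hconv : GConvexFun f) (hbot : ∀ x, f x ≠ ⊥) {y : X} (hy : f y ≠ ⊤)
    (x : X) :
    2 * lam * (f (R x)).toReal + dist x (R x) ^ 2 + dist (R x) y ^ 2 ≤
      2 * lam * (f y).toReal + dist x y ^ 2 := by
  set u := R x
  set a := (f u).toReal
  set b := (f y).toReal
  have hu : f u = a := (EReal.coe_toReal (hR.ne_top hlam hy x) (hbot u)).symm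
  have hy' : f y = b := (EReal.coe_toReal hy (hbot y)).symm
  have hstep : ∀ k : ℕ, 2 * lam * a + dist x u ^ 2 + (1 - (1 / 2) ^ (k + 1)) * dist u y ^ 2 ≤
      2 * lam * b + dist x y ^ 2 := by
    intro k
    obtain ⟨w, huw, hwy, hw⟩ := hX.exists_dyadic u y (k + 1)
    set t : ℝ := (1 / 2) ^ (k + 1)
    have ht : 0 < t := by positivity
    have hconvw : f w ≤ (((1 - t) * a + t * b : ℝ) : EReal) := by
      have := hconv u y w t ⟨ht.le, pow_le_one₀ (by norm_num) (by norm_num)⟩ huw hwy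
      rwa [hu, hy', ← EReal.coe_mul, ← EReal.coe_mul, ← EReal.coe_add] at this
    have hres :
        a + dist x u ^ 2 / (2 * lam) ≤ (1 - t) * a + t * b + dist x w ^ 2 / (2 * lam) := by
      have := (hR x w).trans (add_le_add_left hconvw _)
      rw [hu] at this
      exact_mod_cast this
    field_simp at hres
    have key : t * (2 * lam * a + dist x u ^ 2 + (1 - t) * dist u y ^ 2) ≤
        t * (2 * lam * b + dist x y ^ 2) := by
      linear_combination hres + hw x
    exact le_of_mul_le_mul_left key ht
  have hlim : Tendsto (fun k : ℕ => 2 * lam * a + dist x u ^ 2 +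
      (1 - (1 / 2) ^ (k + 1)) * dist u y ^ 2) atTop
      (𝓝 (2 * lam * a + dist x u ^ 2 + dist u y ^ 2)) := by
    have h : Tendsto (fun k : ℕ => ((1 : ℝ) / 2) ^ (k + 1)) atTop (𝓝 0) :=
      (tendsto_pow_atTop_nhds_zero_of_lt_one (by norm_num) (by norm_num)).comp
        (tendsto_add_atTop_nat 1)
    simpa using (tendsto_const_nhds (x := 2 * lam * a + dist x u ^ 2)).add
      (((tendsto_const_nhds (x := (1 : ℝ))).sub h).mul_const (dist u y ^ 2))
  exact le_of_tendsto' hlim hstep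

lemma IsResolvent.apply_eq_of_mem_argminSet (hR : IsResolvent f lam R) (hlam : 0 < lam)
    (hbot : ∀ x, f x ≠ ⊥) (hfin : ∃ y, f y ≠ ⊤) {p : X} (hp : p ∈ argminSet f) : R p = p := by
  obtain ⟨y, hy⟩ := hfin
  have h := (hR p p).trans (add_le_add_left (hp (R p)) _)
  rw [← EReal.coe_toReal (hR.ne_top hlam hy p) (hbot _), dist_self, ← EReal.coe_add,
    ← EReal.coe_add, EReal.coe_le_coe_iff] at h
  have hd : dist p (R p) ^ 2 / (2 * lam) ≤ 0 := by simpa using h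
  have hd' : dist p (R p) ^ 2 ≤ 0 := by simpa using (div_le_iff₀ (by positivity)).1 hd
  exact (dist_le_zero.1 (by nlinarith [dist_nonneg (x := p) (y := R p)])).symm

lemma IsResolvent.mem_argminSet_of_apply_eq (hX : HasCNMidpoints X) (hR : IsResolvent f lam R)
    (hlam : 0 < lam) (hconv : GConvexFun f) (hbot : ∀ x, f x ≠ ⊥) {z : X} (hz : R z = z) :
    z ∈ argminSet f := by
  intro y
  rcases eq_or_ne (f y) ⊤ with hy | hy
  · simp [hy]
  have hz' : f z ≠ ⊤ := hz ▸ hR.ne_top hlam hy z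
  have h := hR.variational_ineq hX hlam hconv hbot hy z
  rw [hz, dist_self] at h
  have hle : (f z).toReal ≤ (f y).toReal := by nlinarith
  rw [← EReal.coe_toReal hz' (hbot z), ← EReal.coe_toReal hy (hbot y)]
  exact_mod_cast hle

lemma IsResolvent.dist_sq_add_dist_sq_le (hX : HasCNMidpoints X) (hR : IsResolvent f lam R)
    (hlam : 0 < lam) (hconv : GConvexFun f) (hbot : ∀ x, f x ≠ ⊥) (hfin : ∃ y, f y ≠ ⊤)
    {q : X} (hq : R q = q) (x : X) :
    dist x (R x) ^ 2 + dist (R x) q ^ 2 ≤ dist x q ^ 2 := by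
  obtain ⟨y, hy⟩ := hfin
  have hq' : f q ≠ ⊤ := hq ▸ hR.ne_top hlam hy q
  have hmin : (f q).toReal ≤ (f (R x)).toReal :=
    EReal.toReal_le_toReal (hR.mem_argminSet_of_apply_eq hX hlam hconv hbot hq (R x))
      (hbot q) (hR.ne_top hlam hy x)
  nlinarith [hR.variational_ineq hX hlam hconv hbot hq' x]

lemma IsResolvent.dist_sq_add_dist_sq_add_two_mul_le (hX : HasCNMidpoints X)
    (hR : IsResolvent f lam R) (hlam : 0 < lam) (hconv : GConvexFun f) (hbot : ∀ x, f x ≠ ⊥)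
    (hfin : ∃ y, f y ≠ ⊤) (x x' : X) :
    dist x (R x) ^ 2 + dist x' (R x') ^ 2 + 2 * dist (R x) (R x') ^ 2 ≤
      dist x (R x') ^ 2 + dist x' (R x) ^ 2 := by
  obtain ⟨y, hy⟩ := hfin
  have h := hR.variational_ineq hX hlam hconv hbot (hR.ne_top hlam hy x') x
  have h' := hR.variational_ineq hX hlam hconv hbot (hR.ne_top hlam hy x) x'
  rw [dist_comm (R x') (R x)] at h'
  linarith

/-- Δ-demiclosedness of the resolvent, phrased through asymptotic centers. -/
lemma IsResolvent.apply_eq_of_asympCenter (hX : HasCNMidpoints X) (hR : IsResolvent f lam R)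
    (hlam : 0 < lam) (hconv : GConvexFun f) (hbot : ∀ x, f x ≠ ⊥) (hfin : ∃ y, f y ≠ ⊤)
    {v : ℕ → X} (hb : IsBounded (Set.range v)) {c : X} (hc : AsympCenter v c)
    (he : Tendsto (fun n => dist (v n) (R (v n))) atTop (𝓝 0)) : R c = c := by
  obtain ⟨Cb, hCb⟩ := exists_dist_le_of_isBounded hb c
  obtain ⟨Cg, hCg⟩ := exists_dist_le_of_isBounded hb (R c)
  set d := dist c (R c)
  have hpt : ∀ n, dist (R c) (v n) ^ 2 + d ^ 2 ≤
      dist c (v n) ^ 2 + dist (v n) (R (v n)) * (2 * Cb + 4 * Cg) := by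
    intro n
    have hm := hR.dist_sq_add_dist_sq_add_two_mul_le hX hlam hconv hbot hfin c (v n)
    rw [dist_comm (v n) (R c)] at hm
    set e := dist (v n) (R (v n))
    set g := dist (R c) (v n)
    set a := dist (R c) (R (v n))
    set b := dist c (v n)
    have hga : g - e ≤ a := by
      linarith [dist_triangle (R c) (R (v n)) (v n), dist_comm (R (v n)) (v n)]
    have ha : g ^ 2 - 2 * e * g ≤ a ^ 2 := by
      rcases le_total e g with heg | hge
      · nlinarith [dist_nonneg (x := R c) (y := R (v n))]
      · nlinarith [dist_nonneg (x := R c) (y := v n), dist_nonneg (x := R c) (y := R (v n))]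
    have hh : dist c (R (v n)) ^ 2 ≤ (b + e) ^ 2 :=
      pow_le_pow_left₀ dist_nonneg (dist_triangle c (v n) (R (v n))) 2
    have he0 : 0 ≤ e := dist_nonneg
    nlinarith [mul_le_mul_of_nonneg_left (hCb n) he0, mul_le_mul_of_nonneg_left (hCg n) he0]
  have hlim := limsup_le_limsup_of_le_add_of_tendsto_zero hpt
    (by simpa using he.mul_const (2 * Cb + 4 * Cg))
    (isCoboundedUnder_le_of_le atTop fun _ => by positivity) (isBoundedUnder_dist_sq hb c)
    (isBoundedUnder_of ⟨0, fun _ => sq_nonneg _⟩)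
  rw [limsup_add_const atTop _ _ (isBoundedUnder_dist_sq hb (R c))
    (isCoboundedUnder_le_of_le atTop fun _ => sq_nonneg _), ← asympRadius_sq hb,
    ← asympRadius_sq hb] at hlim
  have hcR : asympRadius v c ^ 2 ≤ asympRadius v (R c) ^ 2 :=
    pow_le_pow_left₀ (asympRadius_nonneg hb c) (hc (R c)) 2
  have hd : d = 0 := pow_eq_zero_iff two_ne_zero |>.1 (by nlinarith)
  exact (dist_eq_zero.1 hd).symm

end Resolvent

section Composition

variable {S : ℕ → X → X} {k : ℕ} {q : X}

lemma dist_compUpTo_sq_add_sum_le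
    (hS : ∀ i < k, ∀ w, dist w (S i w) ^ 2 + dist (S i w) q ^ 2 ≤ dist w q ^ 2)
    {j : ℕ} (hj : j ≤ k) (w : X) :
    dist (compUpTo S j w) q ^ 2 +
      ∑ i ∈ Finset.range j, dist (compUpTo S i w) (compUpTo S (i + 1) w) ^ 2 ≤ dist w q ^ 2 := by
  induction j with
  | zero => simp [compUpTo]
  | succ j ih =>
    have hstep : compUpTo S (j + 1) w = S j (compUpTo S j w) := rfl
    rw [Finset.sum_range_succ, hstep]
    linarith [hS j hj (compUpTo S j w), ih (by omega)]

lemma dist_compUpTo_le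
    (hS : ∀ i < k, ∀ w, dist w (S i w) ^ 2 + dist (S i w) q ^ 2 ≤ dist w q ^ 2) (w : X) :
    dist (compUpTo S k w) q ≤ dist w q := by
  have hsum : 0 ≤ ∑ i ∈ Finset.range k, dist (compUpTo S i w) (compUpTo S (i + 1) w) ^ 2 :=
    Finset.sum_nonneg fun _ _ => sq_nonneg _
  exact (pow_le_pow_iff_left₀ dist_nonneg dist_nonneg two_ne_zero).1
    (by linarith [dist_compUpTo_sq_add_sum_le hS le_rfl w])

lemma antitone_dist_iterate {T : X → X} (hT : ∀ w, dist (T w) q ≤ dist w q) (x₀ : X) :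
    Antitone fun n => dist (T^[n] x₀) q :=
  antitone_nat_of_succ_le fun n => by rw [Function.iterate_succ_apply']; exact hT _

lemma isBounded_range_of_antitone_dist {x : ℕ → X} (h : Antitone fun n => dist (x n) q) :
    IsBounded (Set.range x) :=
  (Metric.isBounded_closedBall (x := q) (r := dist (x 0) q)).subset <| by
    rintro _ ⟨n, rfl⟩
    exact h (Nat.zero_le n)

/-- The squared steps of one sweep are bounded by the decrease of `dist (x n) q ^ 2`. -/
lemma tendsto_dist_compUpTo_apply
    (hS : ∀ i < k, ∀ w, dist w (S i w) ^ 2 + dist (S i w) q ^ 2 ≤ dist w q ^ 2)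
    (x₀ : X) {i : ℕ} (hi : i < k) :
    Tendsto (fun n => dist (compUpTo S i ((compUpTo S k)^[n] x₀))
      (S i (compUpTo S i ((compUpTo S k)^[n] x₀)))) atTop (𝓝 0) := by
  set x := fun n => (compUpTo S k)^[n] x₀
  have hanti := antitone_dist_iterate (dist_compUpTo_le hS) x₀
  have hL := tendsto_atTop_ciInf hanti ⟨0, by rintro _ ⟨n, rfl⟩; exact dist_nonneg⟩
  have hdecr : Tendsto (fun n => dist (x n) q ^ 2 - dist (x (n + 1)) q ^ 2) atTop (𝓝 0) := by
    have h := (hL.pow 2).sub ((hL.pow 2).comp (tendsto_add_atTop_nat 1))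
    rwa [sub_self] at h
  refine squeeze_zero (fun _ => dist_nonneg) (fun n => ?_) (by simpa using hdecr.sqrt)
  refine (le_abs_self _).trans (Real.abs_le_sqrt ?_)
  have hsweep := dist_compUpTo_sq_add_sum_le hS le_rfl (x n)
  have hx : compUpTo S k (x n) = x (n + 1) := (Function.iterate_succ_apply' _ n x₀).symm
  rw [hx] at hsweep
  have hterm := Finset.single_le_sum (f := fun j => dist (compUpTo S j (x n))
    (compUpTo S (j + 1) (x n)) ^ 2) (fun _ _ => sq_nonneg _) (Finset.mem_range.2 hi)
  exact (le_sub_iff_add_le'.2 (by linarith)).trans' hterm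

lemma tendsto_dist_iterate_compUpTo
    (hS : ∀ i < k, ∀ w, dist w (S i w) ^ 2 + dist (S i w) q ^ 2 ≤ dist w q ^ 2)
    (x₀ : X) {j : ℕ} (hj : j ≤ k) :
    Tendsto (fun n => dist ((compUpTo S k)^[n] x₀) (compUpTo S j ((compUpTo S k)^[n] x₀)))
      atTop (𝓝 0) := by
  induction j with
  | zero => simp [compUpTo]
  | succ j ih =>
    refine squeeze_zero (fun _ => dist_nonneg) (fun n =>
      dist_triangle _ (compUpTo S j ((compUpTo S k)^[n] x₀)) _) ?_
    have h := (ih (by omega)).add (tendsto_dist_compUpTo_apply hS x₀ hj)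
    rwa [add_zero] at h

end Composition

theorem exists_deltaConv_of_fejer [CompleteSpace X] (hX : HasCNMidpoints X) {x : ℕ → X}
    {F : Set X} (hF : F.Nonempty) (hfejer : ∀ q ∈ F, Antitone fun n => dist (x n) q)
    (hcenter : ∀ φ : ℕ → ℕ, StrictMono φ → ∀ c, AsympCenter (x ∘ φ) c → c ∈ F) :
    ∃ z ∈ F, DeltaConv x z := by
  obtain ⟨p, hp⟩ := hF
  have hb := isBounded_range_of_antitone_dist (hfejer p hp)
  have hrad : ∀ q ∈ F, ∀ φ : ℕ → ℕ, StrictMono φ → asympRadius (x ∘ φ) q = ⨅ n, dist (x n) q :=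
    fun q hq φ hφ => asympRadius_eq_of_tendsto <| (tendsto_atTop_ciInf (hfejer q hq)
      ⟨0, by rintro _ ⟨n, rfl⟩; exact dist_nonneg⟩).comp hφ.tendsto_atTop
  obtain ⟨z, hz⟩ := exists_asympCenter hX hb
  have hzF : z ∈ F := hcenter id strictMono_id z hz
  refine ⟨z, hzF, hb, fun φ hφ => ?_⟩
  have hbφ := hb.subset (Set.range_comp_subset_range φ x)
  obtain ⟨c, hc⟩ := exists_asympCenter hX hbφ
  have hcF := hcenter φ hφ c hc
  have h₁ : asympRadius (x ∘ id) z ^ 2 + dist z c ^ 2 / 2 ≤ asympRadius (x ∘ id) c ^ 2 :=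
    hz.sq_add_le hX hb c
  have h₂ := hc.sq_add_le hX hbφ z
  rw [hrad z hzF id strictMono_id, hrad c hcF id strictMono_id] at h₁
  rw [hrad z hzF φ hφ, hrad c hcF φ hφ, dist_comm] at h₂
  have hcz : dist z c = 0 := pow_eq_zero_iff two_ne_zero |>.1 (by nlinarith [sq_nonneg (dist z c)])
  rwa [← dist_eq_zero.1 hcz] at hc

theorem stmt16_general {X : Type*} [MetricSpace X] (hX : IsHadamard X)
    (m : ℕ) (f : ℕ → X → EReal)
    (hproper : ∀ i < m, ∃ x, f i x ≠ ⊤) (hbot : ∀ i < m, ∀ x, f i x ≠ ⊥)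
    (hconv : ∀ i < m, GConvexFun (f i))
    (hmin : (⋂ i ∈ Finset.range m, argminSet (f i)).Nonempty)
    (lam : ℕ → ℝ) (hlam : ∀ i < m, 0 < lam i)
    (R : ℕ → X → X) (hR : ∀ i < m, IsResolvent (f i) (lam i) (R i))
    (x₀ : X) :
    ∃ z : X, z ∈ argminSet (fun x => ∑ i ∈ Finset.range m, f i x) ∧
      DeltaConv (fun n : ℕ => (compUpTo R m)^[n] x₀) z := by
  obtain ⟨hcomplete, hcn⟩ := hX
  have hfirm : ∀ q, (∀ i < m, R i q = q) → ∀ i < m, ∀ w,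
      dist w (R i w) ^ 2 + dist (R i w) q ^ 2 ≤ dist w q ^ 2 := fun q hq i hi =>
    (hR i hi).dist_sq_add_dist_sq_le hcn (hlam i hi) (hconv i hi) (hbot i hi) (hproper i hi)
      (hq i hi)
  obtain ⟨p, hp⟩ := hmin
  have hpF : ∀ i < m, R i p = p := fun i hi =>
    (hR i hi).apply_eq_of_mem_argminSet (hlam i hi) (hbot i hi) (hproper i hi)
      (Set.mem_iInter₂.1 hp i (Finset.mem_range.2 hi))
  have hfejer : ∀ q, (∀ i < m, R i q = q) →
      Antitone fun n => dist ((compUpTo R m)^[n] x₀) q := fun q hq =>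
    antitone_dist_iterate (dist_compUpTo_le (hfirm q hq)) x₀
  obtain ⟨z, hzF, hz⟩ := exists_deltaConv_of_fejer hcn (F := {q | ∀ i < m, R i q = q})
    ⟨p, hpF⟩ hfejer fun φ hφ c hc i hi => by
      have hb := (isBounded_range_of_antitone_dist (hfejer p hpF)).subset
        (Set.range_comp_subset_range φ _)
      have hgap := (tendsto_dist_iterate_compUpTo (hfirm p hpF) x₀ hi.le).comp hφ.tendsto_atTop
      exact (hR i hi).apply_eq_of_asympCenter hcn (hlam i hi) (hconv i hi) (hbot i hi)
        (hproper i hi) (isBounded_range_of_tendsto_dist hb hgap) (hc.of_tendsto_dist hb hgap)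
        ((tendsto_dist_compUpTo_apply (hfirm p hpF) x₀ hi).comp hφ.tendsto_atTop)
  refine ⟨z, fun y => Finset.sum_le_sum fun i hi => ?_, hz⟩
  have hi := Finset.mem_range.1 hi
  exact (hR i hi).mem_argminSet_of_apply_eq hcn (hlam i hi) (hconv i hi) (hbot i hi) (hzF i hi) y

theorem stmt16 {X : Type*} [MetricSpace X] (hX : IsHadamard X)
    (m : ℕ) (f : ℕ → X → EReal)
    (hproper : ∀ i < m, ∃ x, f i x ≠ ⊤) (hbot : ∀ i < m, ∀ x, f i x ≠ ⊥)
    (hlsc : ∀ i < m, LowerSemicontinuous (f i)) (hconv : ∀ i < m, GConvexFun (f i))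
    (hmin : (⋂ i ∈ Finset.range m, argminSet (f i)).Nonempty)
    (lam : ℕ → ℝ) (hlam : ∀ i < m, 0 < lam i)
    (R : ℕ → X → X) (hR : ∀ i < m, IsResolvent (f i) (lam i) (R i))
    (x₀ : X) :
    ∃ z : X, z ∈ argminSet (fun x => ∑ i ∈ Finset.range m, f i x) ∧
      DeltaConv (fun n : ℕ => (compUpTo R m)^[n] x₀) z :=
  stmt16_general hX m f hproper hbot hconv hmin lam hlam R hR x₀
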